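/- arXiv:2510.12829 — 2 statements merged into one kernel-verified Lean document; each statement's English description precedes it below -/
import Mathlib

section
/- Let f : ℝ^d → ℝ be convex and differentiable with L-Lipschitz gradient (L-smooth), and let η > 0. For any sequence of implicit (backward Euler) iterates satisfying z_{n+1} = z_n − η∇f(z_{n+1}), the sequence n ↦ f(z_n) is convex: f(z_{n+2}) − 2f(z_{n+1}) + f(z_n) ≥ 0 for all n. Moreover, if f is μ-strongly convex for some μ > 0, then the one-step decreases Δ_n = f(z_n) − f(z_{n+1}) satisfy Δ_{n+1} < Δ_n for every n with ∇f(z_n) ≠ 0. -/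
/-!
Write `gₖ = ∇f (zₖ)`, so that `zₖ - zₖ₊₁ = η gₖ₊₁`. The first-order (strong) convexity
inequality, applied at `zₙ₊₁` towards `zₙ` and towards `zₙ₊₂`, gives
`Δₙ ≥ η ‖gₙ₊₁‖² + (μ/2) η² ‖gₙ₊₁‖²` and `Δₙ₊₁ ≤ η ⟪gₙ₊₁, gₙ₊₂⟫ - (μ/2) η² ‖gₙ₊₂‖²`.
Monotonicity of the gradient along the step `zₙ₊₁ → zₙ₊₂` gives `‖gₙ₊₂‖² ≤ ⟪gₙ₊₁, gₙ₊₂⟫`,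
hence `⟪gₙ₊₁, gₙ₊₂⟫ ≤ ‖gₙ₊₁‖²`, and so `Δₙ₊₁ + (μ/2) η² (‖gₙ₊₁‖² + ‖gₙ₊₂‖²) ≤ Δₙ`.
Convexity is the case `μ = 0`.
-/

open RealInnerProductSpace

theorem ConvexOn.add_fderiv_sub_le {E : Type*} [NormedAddCommGroup E] [NormedSpace ℝ E]
    {s : Set E} {f : E → ℝ} {f' : E →L[ℝ] ℝ} {x y : E} (hf : ConvexOn ℝ s f)
    (hx : x ∈ s) (hy : y ∈ s) (hfx : HasFDerivAt f f' x) :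
    f x + f' (y - x) ≤ f y := by
  have hline : HasDerivAt (AffineMap.lineMap x y) (y - x) (0 : ℝ) := by
    simpa using AffineMap.hasDerivAt_lineMap (a := x) (b := y) (x := (0 : ℝ))
  have hderiv : HasDerivAt (f ∘ AffineMap.lineMap (k := ℝ) x y) (f' (y - x)) 0 :=
    hfx.comp_hasDerivAt_of_eq 0 hline (by simp)
  have hslope := (hf.comp_affineMap (AffineMap.lineMap (k := ℝ) x y)).le_slope_of_hasDerivAt
    (by simpa using hx) (by simpa using hy) zero_lt_one hderiv
  simp only [slope_def_field, Function.comp_apply, AffineMap.lineMap_apply_zero,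
    AffineMap.lineMap_apply_one, sub_zero, div_one] at hslope
  linarith

theorem ConvexOn.add_inner_gradient_le {E : Type*} [NormedAddCommGroup E]
    [InnerProductSpace ℝ E] [CompleteSpace E] {f : E → ℝ} (hf : ConvexOn ℝ Set.univ f) {x : E}
    (hfx : DifferentiableAt ℝ f x) (y : E) :
    f x + ⟪gradient f x, y - x⟫ ≤ f y := by
  simpa only [inner_gradient_left] using
    hf.add_fderiv_sub_le (Set.mem_univ x) (Set.mem_univ y) hfx.hasFDerivAt

theorem real_inner_le_norm_sq_of_norm_sq_le {E : Type*} [NormedAddCommGroup E]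
    [InnerProductSpace ℝ E] {a b : E} (h : ‖b‖ ^ 2 ≤ ⟪a, b⟫) : ⟪a, b⟫ ≤ ‖a‖ ^ 2 := by
  nlinarith [norm_sub_sq_real a b, sq_nonneg ‖a - b‖]

theorem implicit_steps_sub_add_le_sub {E : Type*} [NormedAddCommGroup E]
    [InnerProductSpace ℝ E] {f : E → ℝ} {g : E → E} {μ η : ℝ} (hμ : 0 ≤ μ) (hη : 0 < η)
    (hf : ∀ u v, f u + ⟪g u, v - u⟫ + μ / 2 * ‖v - u‖ ^ 2 ≤ f v) {x y w : E}
    (hy : y = x - η • g y) (hw : w = y - η • g w) :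
    f y - f w + μ / 2 * η ^ 2 * (‖g y‖ ^ 2 + ‖g w‖ ^ 2) ≤ f x - f y := by
  have hxy : x - y = η • g y := by rw [sub_eq_iff_eq_add', ← sub_eq_iff_eq_add, ← hy]
  have hyw : y - w = η • g w := by rw [sub_eq_iff_eq_add', ← sub_eq_iff_eq_add, ← hw]
  have hdesc := hf y x
  have hupper := hf y w
  have hback := hf w y
  rw [hxy, real_inner_smul_right, real_inner_self_eq_norm_sq, norm_smul] at hdesc
  rw [← neg_sub, hyw, inner_neg_right, real_inner_smul_right, norm_neg, norm_smul] at hupper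
  rw [hyw, real_inner_smul_right, real_inner_self_eq_norm_sq, norm_smul] at hback
  rw [Real.norm_of_nonneg hη.le] at hdesc hupper hback
  -- adding the two inequalities between `y` and `w` shows that `g` is monotone along the step
  have hmono : ‖g w‖ ^ 2 ≤ ⟪g y, g w⟫ := by
    nlinarith [mul_nonneg (mul_nonneg hμ (sq_nonneg η)) (sq_nonneg ‖g w‖)]
  have hinner := real_inner_le_norm_sq_of_norm_sq_le hmono
  nlinarith

theorem implicit_gd_curve_convex_general
    {E : Type*} [NormedAddCommGroup E] [InnerProductSpace ℝ E]
    [FiniteDimensional ℝ E]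
    (f : E → ℝ) (hdiff : Differentiable ℝ f) (hconv : ConvexOn ℝ Set.univ f)
    (η : ℝ) (hη : 0 < η)
    (z : ℕ → E)
    (hz : ∀ n, z (n + 1) = z n - η • gradient f (z (n + 1))) :
    (∀ n, f (z (n + 2)) - 2 * f (z (n + 1)) + f (z n) ≥ 0) ∧
      (∀ μ : ℝ, 0 < μ →
        (∀ u v : E, f v ≥ f u + ⟪gradient f u, v - u⟫ + μ / 2 * ‖v - u‖ ^ 2) →
        ∀ n, gradient f (z n) ≠ 0 →
          f (z (n + 1)) - f (z (n + 2)) < f (z n) - f (z (n + 1))) := by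
  refine ⟨fun n => ?_, fun μ hμ hsc n hgrad => ?_⟩
  · have hfirst (u v : E) : f u + ⟪gradient f u, v - u⟫ + 0 / 2 * ‖v - u‖ ^ 2 ≤ f v := by
      simpa using hconv.add_inner_gradient_le (hdiff u) v
    have := implicit_steps_sub_add_le_sub le_rfl hη hfirst (hz n) (hz (n + 1))
    linarith
  · have hgrad_succ : gradient f (z (n + 1)) ≠ 0 := by
      intro h
      have hfixed : z (n + 1) = z n := by rw [hz n, h, smul_zero, sub_zero]
      exact hgrad (hfixed ▸ h)
    have hdecr := implicit_steps_sub_add_le_sub hμ.le hη hsc (hz n) (hz (n + 1))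
    have : 0 < μ / 2 * η ^ 2 * ‖gradient f (z (n + 1))‖ ^ 2 := by positivity
    have : 0 ≤ μ / 2 * η ^ 2 * ‖gradient f (z (n + 2))‖ ^ 2 := by positivity
    linarith

/-- **The implicit (backward Euler) method convexifies the optimization curve.**
Let `f : E → ℝ` be convex and differentiable with `L`-Lipschitz gradient, and let
`η > 0`.  For any implicit iterates `z (n+1) = z n - η • ∇f (z (n+1))`, the
sequence `n ↦ f (z n)` is convex: `f (z (n+2)) - 2 f (z (n+1)) + f (z n) ≥ 0`.
Moreover, if `f` is `μ`-strongly convex for some `μ > 0`, then the one-step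
decreases `Δ n = f (z n) - f (z (n+1))` satisfy `Δ (n+1) < Δ n` for every `n`
with `∇f (z n) ≠ 0`. -/
theorem implicit_gd_curve_convex
    {E : Type*} [NormedAddCommGroup E] [InnerProductSpace ℝ E]
    [FiniteDimensional ℝ E]
    (f : E → ℝ) (hdiff : Differentiable ℝ f) (hconv : ConvexOn ℝ Set.univ f)
    (L : ℝ) (hL : 0 < L)
    (hsmooth : ∀ u v : E, ‖gradient f u - gradient f v‖ ≤ L * ‖u - v‖)
    (η : ℝ) (hη : 0 < η)
    (z : ℕ → E)
    (hz : ∀ n, z (n + 1) = z n - η • gradient f (z (n + 1))) :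
    (∀ n, f (z (n + 2)) - 2 * f (z (n + 1)) + f (z n) ≥ 0) ∧
      (∀ μ : ℝ, 0 < μ →
        (∀ u v : E, f v ≥ f u + ⟪gradient f u, v - u⟫ + μ / 2 * ‖v - u‖ ^ 2) →
        ∀ n, gradient f (z n) ≠ 0 →
          f (z (n + 1)) - f (z (n + 2)) < f (z n) - f (z (n + 1))) :=
  implicit_gd_curve_convex_general f hdiff hconv η hη z hz
end

section
/- Let B be an invertible real n×n matrix with columns b_1, …, b_n, and let b_1*, …, b_n* be the columns of (B⁻¹)ᵀ (the dual basis of the columns of B). Suppose S, λ, λ* are positive reals with ‖b_i‖·‖b_i*‖ ≤ S for all i, ‖b_i‖ ≥ λ for all i, and ‖b_i*‖ ≥ λ* for all i. Then the condition number satisfies ‖B‖·‖B⁻¹‖ ≤ n·S²/(λ·λ*), where ‖·‖ is the ℓ²→ℓ² operator norm. -/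
open Matrix

/-- Euclidean (`ℓ²`) norm of a vector in `ℝⁿ` given as a plain function. -/
noncomputable def eucNorm {n : ℕ} (v : Fin n → ℝ) : ℝ :=
  ‖(WithLp.equiv 2 (Fin n → ℝ)).symm v‖

/-- `ℓ² → ℓ²` operator norm of a real `n × n` matrix. -/
noncomputable def l2OpNorm {n : ℕ} (M : Matrix (Fin n) (Fin n) ℝ) : ℝ :=
  ‖(Matrix.toEuclideanCLM (𝕜 := ℝ) M :
      EuclideanSpace ℝ (Fin n) →L[ℝ] EuclideanSpace ℝ (Fin n))‖

/-!
Each column of `B` has norm at most `S / λ*`, because its dual column has norm at least `λ*`;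
likewise each dual column has norm at most `S / λ`. The operator norm is bounded by the
Frobenius norm, hence by `√n` times the largest column norm, and `‖B⁻¹‖ = ‖(B⁻¹)ᵀ‖` is
controlled by the dual columns. Multiplying the two bounds gives `n S² / (λ λ*)`.
-/

lemma eucNorm_nonneg {n : ℕ} (v : Fin n → ℝ) : 0 ≤ eucNorm v := norm_nonneg _

lemma l2OpNorm_nonneg {n : ℕ} (M : Matrix (Fin n) (Fin n) ℝ) : 0 ≤ l2OpNorm M := norm_nonneg _

open scoped Matrix.Norms.L2Operator in
lemma l2OpNorm_transpose {n : ℕ} (M : Matrix (Fin n) (Fin n) ℝ) :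
    l2OpNorm Mᵀ = l2OpNorm M := by
  simpa only [l2OpNorm, ← l2_opNorm_toEuclideanCLM, conjTranspose_eq_transpose_of_trivial]
    using l2_opNorm_conjTranspose M

lemma toEuclideanCLM_apply_eq_sum_col {n : ℕ} (M : Matrix (Fin n) (Fin n) ℝ)
    (x : EuclideanSpace ℝ (Fin n)) :
    toEuclideanCLM (𝕜 := ℝ) M x = ∑ j, x j • WithLp.toLp 2 (fun i => M i j) := by
  ext i
  simp [mulVec, dotProduct, mul_comm]

lemma l2OpNorm_le_sqrt_sum_eucNorm_col_sq {n : ℕ} (M : Matrix (Fin n) (Fin n) ℝ) :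
    l2OpNorm M ≤ √(∑ j, eucNorm (fun i => M i j) ^ 2) := by
  refine ContinuousLinearMap.opNorm_le_bound _ (Real.sqrt_nonneg _) fun x => ?_
  rw [toEuclideanCLM_apply_eq_sum_col]
  calc ‖∑ j, x j • WithLp.toLp 2 (fun i => M i j)‖
      ≤ ∑ j, |x j| * eucNorm (fun i => M i j) :=
        (norm_sum_le _ _).trans_eq (by simp [norm_smul, eucNorm])
    _ ≤ √(∑ j, |x j| ^ 2) * √(∑ j, eucNorm (fun i => M i j) ^ 2) :=
        Real.sum_mul_le_sqrt_mul_sqrt _ _ _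
    _ = √(∑ j, eucNorm (fun i => M i j) ^ 2) * ‖x‖ := by
        rw [EuclideanSpace.norm_eq, mul_comm]
        simp

lemma l2OpNorm_le_sqrt_card_mul_of_eucNorm_col_le {n : ℕ} (M : Matrix (Fin n) (Fin n) ℝ)
    {C : ℝ} (hC : 0 ≤ C) (h : ∀ j, eucNorm (fun i => M i j) ≤ C) :
    l2OpNorm M ≤ √n * C := by
  calc l2OpNorm M ≤ √(∑ j, eucNorm (fun i => M i j) ^ 2) :=
        l2OpNorm_le_sqrt_sum_eucNorm_col_sq M
    _ ≤ √(∑ _j : Fin n, C ^ 2) := by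
        gcongr with j
        exacts [eucNorm_nonneg _, h j]
    _ = √n * C := by simp [Real.sqrt_mul, Real.sqrt_sq hC]

theorem condition_number_bound_general {n : ℕ} (B : Matrix (Fin n) (Fin n) ℝ)
    (S lam lamStar : ℝ) (hS : 0 < S) (hlam : 0 < lam) (hlamStar : 0 < lamStar)
    (hprod : ∀ i, eucNorm (fun j => B j i) * eucNorm (fun j => (B⁻¹)ᵀ j i) ≤ S)
    (hlow : ∀ i, eucNorm (fun j => B j i) ≥ lam)
    (hlowStar : ∀ i, eucNorm (fun j => (B⁻¹)ᵀ j i) ≥ lamStar) :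
    l2OpNorm B * l2OpNorm B⁻¹ ≤ n * S ^ 2 / (lam * lamStar) := by
  have hcol : ∀ i, eucNorm (fun j => B j i) ≤ S / lamStar := fun i =>
    (le_div_iff₀ hlamStar).2 <|
      (mul_le_mul_of_nonneg_left (hlowStar i) (eucNorm_nonneg _)).trans (hprod i)
  have hdual : ∀ i, eucNorm (fun j => (B⁻¹)ᵀ j i) ≤ S / lam := fun i =>
    (le_div_iff₀' hlam).2 <|
      (mul_le_mul_of_nonneg_right (hlow i) (eucNorm_nonneg _)).trans (hprod i)
  have hnormB := l2OpNorm_le_sqrt_card_mul_of_eucNorm_col_le B (by positivity) hcol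
  have hnormBinv := l2OpNorm_transpose B⁻¹ ▸
    l2OpNorm_le_sqrt_card_mul_of_eucNorm_col_le (B⁻¹)ᵀ (by positivity) hdual
  calc l2OpNorm B * l2OpNorm B⁻¹
      ≤ (√n * (S / lamStar)) * (√n * (S / lam)) :=
        mul_le_mul hnormB hnormBinv (l2OpNorm_nonneg _) ((l2OpNorm_nonneg _).trans hnormB)
    _ = n * S ^ 2 / (lam * lamStar) := by
        rw [mul_mul_mul_comm, Real.mul_self_sqrt n.cast_nonneg]
        field_simp

/-- **Seysen-style condition number bound.**  Let `B` be an invertible real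
`n × n` matrix with columns `bᵢ`, and let `bᵢ*` be the columns of `(B⁻¹)ᵀ`
(the dual basis).  If `‖bᵢ‖ * ‖bᵢ*‖ ≤ S`, `‖bᵢ‖ ≥ λ` and `‖bᵢ*‖ ≥ λ*` for all
`i`, with `S, λ, λ* > 0`, then `‖B‖ * ‖B⁻¹‖ ≤ n * S² / (λ * λ*)` for the
`ℓ² → ℓ²` operator norm. -/
theorem condition_number_bound {n : ℕ} (B : Matrix (Fin n) (Fin n) ℝ)
    (hB : IsUnit B.det)
    (S lam lamStar : ℝ) (hS : 0 < S) (hlam : 0 < lam) (hlamStar : 0 < lamStar)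
    (hprod : ∀ i, eucNorm (fun j => B j i) * eucNorm (fun j => (B⁻¹)ᵀ j i) ≤ S)
    (hlow : ∀ i, eucNorm (fun j => B j i) ≥ lam)
    (hlowStar : ∀ i, eucNorm (fun j => (B⁻¹)ᵀ j i) ≥ lamStar) :
    l2OpNorm B * l2OpNorm B⁻¹ ≤ n * S ^ 2 / (lam * lamStar) :=
  condition_number_bound_general B S lam lamStar hS hlam hlamStar hprod hlow hlowStar
end
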